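/- arXiv:1205.2946 — 2 statements merged into one kernel-verified Lean document; each statement's English description precedes it below -/
import Mathlib

section
/- Let V be a finite-dimensional complex vector space with a U_q(sl₂)-module structure (X⁺, X⁻, K) such that V = ⊕_{i=0}^{d} Uᵢ, where Uᵢ is the eigenspace of K with eigenvalue q^{2i−d}. Let W be a subspace of V with X⁺W ⊆ W and KW ⊆ W. If dim(W ∩ Uᵢ) = dim(W ∩ U_{d−i}) for all 0 ≤ i ≤ d, then X⁻W ⊆ W. -/
open scoped TensorProduct

noncomputable section

/-- The `q`-integer `[t] = (q^t - q^(-t))/(q - q⁻¹)`. -/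
def qnum (q : ℂ) (t : ℤ) : ℂ := (q ^ t - q ^ (-t)) / (q - q⁻¹)

/-- The `q`-factorial `[t]! = [t][t-1]⋯[1]`. -/
def qfac (q : ℂ) (t : ℕ) : ℂ := ∏ k ∈ Finset.range t, qnum q ((k : ℤ) + 1)

/-- Commutator `[X,Y] = XY - YX`. -/
def brk {V : Type*} [AddCommGroup V] [Module ℂ V] (X Y : Module.End ℂ V) :
    Module.End ℂ V := X * Y - Y * X

/-- `q`-commutator `[X,Y]_t = t XY - t⁻¹ YX`. -/
def brkq {V : Type*} [AddCommGroup V] [Module ℂ V] (t : ℂ) (X Y : Module.End ℂ V) :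
    Module.End ℂ V := t • (X * Y) - t⁻¹ • (Y * X)

/-- A `U'_q(L(sl₂))`-module structure on a complex vector space `V`:
operators `(E₀⁺, E₁⁺, E₁⁻, K₀, K₁)` with `K₀, K₁` mutually inverse (hence invertible) and
the defining relations; `K₀ = K₁⁻¹` throughout. -/
structure IsUqpRep (q : ℂ) {V : Type*} [AddCommGroup V] [Module ℂ V]
    (E0 E1p E1m K0 K1 : Module.End ℂ V) : Prop where
  K0K1 : K0 * K1 = 1
  K1K0 : K1 * K0 = 1
  K0E0 : K0 * E0 = q ^ 2 • (E0 * K0)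
  K1E1p : K1 * E1p = q ^ 2 • (E1p * K1)
  K1E1m : K1 * E1m = (q ^ 2)⁻¹ • (E1m * K1)
  K1E0 : K1 * E0 = (q ^ 2)⁻¹ • (E0 * K1)
  K0E1p : K0 * E1p = (q ^ 2)⁻¹ • (E1p * K0)
  K0E1m : K0 * E1m = q ^ 2 • (E1m * K0)
  e1comm : E1p * E1m - E1m * E1p = (q - q⁻¹)⁻¹ • (K1 - K0)
  e0e1m : E0 * E1m = E1m * E0
  serre01 : brk E0 (brkq q⁻¹ E0 (brkq q E0 E1p)) = 0
  serre10 : brk E1p (brkq q⁻¹ E1p (brkq q E1p E0)) = 0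

/-- `K₀` of the evaluation module `V(ℓ,a)`: `K₀ vᵢ = q^(2i-ℓ) vᵢ`. -/
def evalK0 (q : ℂ) (ℓ : ℕ) : Module.End ℂ (Fin (ℓ + 1) → ℂ) :=
  (Matrix.diagonal fun i : Fin (ℓ + 1) => q ^ (2 * (i : ℤ) - ℓ)).mulVecLin

/-- `K₁` of the evaluation module `V(ℓ,a)`: `K₁ vᵢ = q^(ℓ-2i) vᵢ`. -/
def evalK1 (q : ℂ) (ℓ : ℕ) : Module.End ℂ (Fin (ℓ + 1) → ℂ) :=
  (Matrix.diagonal fun i : Fin (ℓ + 1) => q ^ ((ℓ : ℤ) - 2 * i)).mulVecLin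

/-- `E₀⁺` of the evaluation module `V(ℓ,a)`: `E₀⁺ vᵢ = a q [i+1] vᵢ₊₁`. -/
def evalE0 (q a : ℂ) (ℓ : ℕ) : Module.End ℂ (Fin (ℓ + 1) → ℂ) :=
  (Matrix.of fun j i : Fin (ℓ + 1) =>
    if (j : ℕ) = (i : ℕ) + 1 then a * q * qnum q ((i : ℤ) + 1) else 0).mulVecLin

/-- `E₁⁺` of the evaluation module `V(ℓ,a)`: `E₁⁺ vᵢ = [ℓ-i+1] vᵢ₋₁`. -/
def evalE1p (q : ℂ) (ℓ : ℕ) : Module.End ℂ (Fin (ℓ + 1) → ℂ) :=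
  (Matrix.of fun j i : Fin (ℓ + 1) =>
    if (i : ℕ) = (j : ℕ) + 1 then qnum q ((ℓ : ℤ) - (i : ℤ) + 1) else 0).mulVecLin

/-- `E₁⁻` of the evaluation module `V(ℓ,a)`: `E₁⁻ vᵢ = [i+1] vᵢ₊₁`. -/
def evalE1m (q : ℂ) (ℓ : ℕ) : Module.End ℂ (Fin (ℓ + 1) → ℂ) :=
  (Matrix.of fun j i : Fin (ℓ + 1) =>
    if (j : ℕ) = (i : ℕ) + 1 then qnum q ((i : ℤ) + 1) else 0).mulVecLin

/-- Irreducibility: the only subspaces invariant under all five operators are `⊥` and `⊤`. -/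
def IsIrred {V : Type*} [AddCommGroup V] [Module ℂ V]
    (E0 E1p E1m K0 K1 : Module.End ℂ V) : Prop :=
  ∀ W : Submodule ℂ V, (∀ v ∈ W, E0 v ∈ W) → (∀ v ∈ W, E1p v ∈ W) →
    (∀ v ∈ W, E1m v ∈ W) → (∀ v ∈ W, K0 v ∈ W) → (∀ v ∈ W, K1 v ∈ W) →
    W = ⊥ ∨ W = ⊤

/-- Type `(1,1)`: `K₀` is diagonalizable with all eigenvalues of the form `q^(2i-d)`,
`0 ≤ i ≤ d`, i.e. the corresponding eigenspaces span. -/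
def IsType11 (q : ℂ) {V : Type*} [AddCommGroup V] [Module ℂ V] (K0 : Module.End ℂ V) : Prop :=
  ∃ d : ℕ, ⨆ i : Fin (d + 1), Module.End.eigenspace K0 (q ^ (2 * (i : ℤ) - d)) = ⊤

/-- A `U_q(sl₂)`-module structure `(X⁺, X⁻, K)` (with `Kinv` the inverse of `K`). -/
structure IsUqSl2 (q : ℂ) {V : Type*} [AddCommGroup V] [Module ℂ V]
    (Xp Xm K Kinv : Module.End ℂ V) : Prop where
  KKinv : K * Kinv = 1
  KinvK : Kinv * K = 1
  KXp : K * Xp = q ^ 2 • (Xp * K)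
  KXm : K * Xm = (q ^ 2)⁻¹ • (Xm * K)
  comm : Xp * Xm - Xm * Xp = (q - q⁻¹)⁻¹ • (K - Kinv)

/-!
Since `W` is `K`-stable, it is the sum of its pieces `W ∩ E(q^t)` (`E` the eigenspaces of `K`), so
it suffices to show `Xm (W ∩ E(q^t)) ⊆ W` for every `t`. As for `sl₂`, the Casimir element shows
that `Xp ^ n : E(q^(-n)) → E(q^n)` is injective; as `W ∩ E(q^(-n))` and `W ∩ E(q^n)` have the
same dimension, it maps the first onto the second. Modulo `W`, `Xm (Xp ^ n) u ≡ (Xp ^ n) (Xm u)`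
for `u ∈ W ∩ E(q^t)`. Hence weight `n` reduces to weight `-n`; and for `w ∈ W ∩ E(q^(2 - n))`
the vector `(Xp ^ n) (Xm w) ≡ Xm ((Xp ^ n) w)` lies in `W ∩ E(q^n)`, so `Xm w` is its preimage
in `W ∩ E(q^(-n))`, which reduces weight `2 - n` to weight `n + 2`. A downward induction over
the non-positive weights, which eventually vanish, concludes.
-/

section QArith

variable {G₀ : Type*} [GroupWithZero G₀] {q : G₀}

lemma zpow_injective_of_pow_ne_one (hq0 : q ≠ 0) (hq : ∀ n : ℕ, 0 < n → q ^ n ≠ 1) :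
    Function.Injective (q ^ · : ℤ → G₀) := by
  have hfin : ¬IsOfFinOrder (Units.mk0 q hq0) := by
    rw [isOfFinOrder_iff_pow_eq_one]
    rintro ⟨n, hn, hqn⟩
    exact hq n hn (by simpa [Units.ext_iff] using hqn)
  intro a b hab
  exact injective_zpow_iff_not_isOfFinOrder.mpr hfin (Units.ext (by simpa using hab))

lemma ne_zero_of_zpow_injective (hq : Function.Injective (q ^ · : ℤ → G₀)) : q ≠ 0 := by
  rintro rfl
  exact absurd (@hq 1 2 (by simp)) (by norm_num)

end QArith

lemma eq_or_eq_neg_of_zpow_add_zpow_neg_eq {F : Type*} [Field F] {q : F}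
    (hq : Function.Injective (q ^ · : ℤ → F)) {a b : ℤ}
    (hab : q ^ a + q ^ (-a) = q ^ b + q ^ (-b)) : a = b ∨ a = -b := by
  have hq0 := ne_zero_of_zpow_injective hq
  have ha : q ^ a * q ^ (-a) = 1 := by rw [← zpow_add₀ hq0]; simp
  have hb : q ^ b * q ^ (-b) = 1 := by rw [← zpow_add₀ hq0]; simp
  have hfactor : (q ^ a - q ^ b) * (q ^ a - q ^ (-b)) = 0 := by
    linear_combination q ^ a * hab - ha + hb
  rcases mul_eq_zero.mp hfactor with h | h
  · exact .inl (hq (sub_eq_zero.mp h))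
  · exact .inr (hq (sub_eq_zero.mp h))

namespace Module.End

variable {R M : Type*}

lemma exists_lt_pow_apply_ne_zero_and_apply_eq_zero [Semiring R] [AddCommMonoid M] [Module R M]
    {A : Module.End R M} {x : M} {n : ℕ} (hx : x ≠ 0) (hn : (A ^ n) x = 0) :
    ∃ k < n, (A ^ k) x ≠ 0 ∧ A ((A ^ k) x) = 0 := by
  classical
  have hex : ∃ m, (A ^ m) x = 0 := ⟨n, hn⟩
  obtain ⟨k, hk⟩ : ∃ k, Nat.find hex = k + 1 :=
    Nat.exists_eq_succ_of_ne_zero fun h0 => hx (by simpa [h0] using Nat.find_spec hex)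
  refine ⟨k, by have := Nat.find_min' hex hn; omega, Nat.find_min hex (by omega), ?_⟩
  rw [← Module.End.mul_apply, ← pow_succ', ← hk]
  exact Nat.find_spec hex

lemma pow_apply_mem [Semiring R] [AddCommMonoid M] [Module R M] {f : Module.End R M}
    {p : Submodule R M} (hf : ∀ x ∈ p, f x ∈ p) (n : ℕ) {x : M} (hx : x ∈ p) : (f ^ n) x ∈ p := by
  rw [coe_pow]
  exact Set.MapsTo.iterate hf n hx

lemma exists_mem_ne_zero_apply_eq_smul [Field R] [IsAlgClosed R] [AddCommGroup M] [Module R M]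
    [FiniteDimensional R M] {f : Module.End R M} {p : Submodule R M}
    (hp : ∀ x ∈ p, f x ∈ p) (hne : p ≠ ⊥) : ∃ μ : R, ∃ x ∈ p, x ≠ 0 ∧ f x = μ • x := by
  have : Nontrivial p := Submodule.nontrivial_iff_ne_bot.mpr hne
  obtain ⟨μ, hμ⟩ := Module.End.exists_eigenvalue (f.restrict hp)
  obtain ⟨y, hy, hy0⟩ := hμ.exists_hasEigenvector
  refine ⟨μ, y, y.2, fun h0 => hy0 (Subtype.ext h0), ?_⟩
  simpa using congrArg Subtype.val (mem_eigenspace_iff.mp hy)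

lemma exists_forall_lt_eigenspace_zpow_eq_bot [Field R] [AddCommGroup M] [Module R M]
    [FiniteDimensional R M] {q : R} (hq : Function.Injective (q ^ · : ℤ → R))
    (f : Module.End R M) : ∃ b : ℤ, ∀ t < b, f.eigenspace (q ^ t) = ⊥ := by
  obtain ⟨b, hb⟩ := (f.finite_hasEigenvalue.preimage hq.injOn).bddBelow
  refine ⟨b, fun t ht => ?_⟩
  by_contra hne
  exact absurd (hb (show t ∈ _ from hasEigenvalue_iff.mpr hne)) (not_le.mpr ht)

lemma eigenspace_eq_bot_of_iSup_eigenspace_eq_top [Field R] [AddCommGroup M] [Module R M]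
    {ι : Type*} {f : Module.End R M} {μ : ι → R} (hspan : ⨆ i, f.eigenspace (μ i) = ⊤) {ν : R}
    (hν : ∀ i, μ i ≠ ν) : f.eigenspace ν = ⊥ := by
  have hle : ⨆ i, f.eigenspace (μ i) ≤ ⨆ (μ' : R) (_ : μ' ≠ ν), f.eigenspace μ' :=
    iSup_le fun i => le_iSup₂_of_le (μ i) (hν i) le_rfl
  rw [hspan, top_le_iff] at hle
  simpa [hle] using f.eigenspaces_iSupIndep ν

lemma le_comap_of_forall_inf_eigenspace_le [Field R] [AddCommGroup M] [Module R M]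
    [FiniteDimensional R M] {f g : Module.End R M} {p : Submodule R M} (hf : ∀ x ∈ p, f x ∈ p)
    (hdiag : ⨆ μ, f.eigenspace μ = ⊤) (hg : ∀ μ, p ⊓ f.eigenspace μ ≤ p.comap g) :
    p ≤ p.comap g :=
  calc p = p ⊓ ⨆ μ, f.eigenspace μ := by rw [hdiag, inf_top_eq]
    _ = ⨆ μ, p ⊓ f.eigenspace μ := Submodule.inf_iSup_genEigenspace hf 1
    _ ≤ p.comap g := iSup_le hg

end Module.End

/-- `(q - q⁻¹)²` times the usual Casimir element `Xm Xp + (q K + q⁻¹ Kinv) / (q - q⁻¹)²`. -/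
def casimir (q : ℂ) {V : Type*} [AddCommGroup V] [Module ℂ V]
    (Xp Xm K Kinv : Module.End ℂ V) : Module.End ℂ V :=
  (q - q⁻¹) ^ 2 • (Xm * Xp) + q • K + q⁻¹ • Kinv

namespace IsUqSl2

variable {q : ℂ} {V : Type*} [AddCommGroup V] [Module ℂ V] {Xp Xm K Kinv : Module.End ℂ V}

lemma Kinv_mul_Xp (h : IsUqSl2 q Xp Xm K Kinv) (hq0 : q ≠ 0) :
    Kinv * Xp = (q ^ 2)⁻¹ • (Xp * Kinv) := by
  have hconj : Kinv * (K * Xp) * Kinv = Xp * Kinv := by rw [← mul_assoc, h.KinvK, one_mul]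
  simp only [h.KXp, mul_smul_comm, smul_mul_assoc, mul_assoc, h.KKinv, mul_one] at hconj
  rw [← hconj, inv_smul_smul₀ (pow_ne_zero 2 hq0)]

lemma Kinv_mul_Xm (h : IsUqSl2 q Xp Xm K Kinv) (hq0 : q ≠ 0) :
    Kinv * Xm = q ^ 2 • (Xm * Kinv) := by
  have hconj : Kinv * (K * Xm) * Kinv = Xm * Kinv := by rw [← mul_assoc, h.KinvK, one_mul]
  simp only [h.KXm, mul_smul_comm, smul_mul_assoc, mul_assoc, h.KKinv, mul_one] at hconj
  rw [← hconj, smul_inv_smul₀ (pow_ne_zero 2 hq0)]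

lemma Kinv_apply_of_mem (h : IsUqSl2 q Xp Xm K Kinv) {μ : ℂ} {v : V}
    (hv : v ∈ K.eigenspace μ) : Kinv v = μ⁻¹ • v := by
  have hv' : v = μ • Kinv v := by
    rw [← map_smul, ← Module.End.mem_eigenspace_iff.mp hv, ← Module.End.mul_apply, h.KinvK,
      Module.End.one_apply]
  rcases eq_or_ne μ 0 with rfl | hμ
  · rw [zero_smul] at hv'
    rw [hv', map_zero, smul_zero]
  · rw [hv', smul_smul, inv_mul_cancel₀ hμ, one_smul, ← hv']

lemma Xp_mem_eigenspace (h : IsUqSl2 q Xp Xm K Kinv) (hq0 : q ≠ 0) {t : ℤ} {v : V}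
    (hv : v ∈ K.eigenspace (q ^ t)) : Xp v ∈ K.eigenspace (q ^ (t + 2)) := by
  rw [Module.End.mem_eigenspace_iff] at hv ⊢
  rw [← Module.End.mul_apply, h.KXp, LinearMap.smul_apply, Module.End.mul_apply, hv, map_smul,
    smul_smul, zpow_add₀ hq0, mul_comm]
  norm_cast

lemma Xm_mem_eigenspace (h : IsUqSl2 q Xp Xm K Kinv) (hq0 : q ≠ 0) {t : ℤ} {v : V}
    (hv : v ∈ K.eigenspace (q ^ t)) : Xm v ∈ K.eigenspace (q ^ (t - 2)) := by
  rw [Module.End.mem_eigenspace_iff] at hv ⊢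
  rw [← Module.End.mul_apply, h.KXm, LinearMap.smul_apply, Module.End.mul_apply, hv, map_smul,
    smul_smul, zpow_sub₀ hq0, div_eq_mul_inv, mul_comm]
  norm_cast

lemma pow_Xp_apply_mem_eigenspace (h : IsUqSl2 q Xp Xm K Kinv) (hq0 : q ≠ 0) {t : ℤ} {v : V}
    (hv : v ∈ K.eigenspace (q ^ t)) (n : ℕ) :
    (Xp ^ n) v ∈ K.eigenspace (q ^ (t + 2 * n)) := by
  induction n with
  | zero => simpa using hv
  | succ n ih =>
    rw [pow_succ', Module.End.mul_apply]
    convert h.Xp_mem_eigenspace hq0 ih using 3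
    push_cast; ring

lemma pow_Xm_apply_mem_eigenspace (h : IsUqSl2 q Xp Xm K Kinv) (hq0 : q ≠ 0) {t : ℤ} {v : V}
    (hv : v ∈ K.eigenspace (q ^ t)) (n : ℕ) :
    (Xm ^ n) v ∈ K.eigenspace (q ^ (t - 2 * n)) := by
  induction n with
  | zero => simpa using hv
  | succ n ih =>
    rw [pow_succ', Module.End.mul_apply]
    convert h.Xm_mem_eigenspace hq0 ih using 3
    push_cast; ring

lemma Xp_Xm_apply_sub (h : IsUqSl2 q Xp Xm K Kinv) {t : ℤ} {v : V}
    (hv : v ∈ K.eigenspace (q ^ t)) : Xp (Xm v) - Xm (Xp v) = qnum q t • v := by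
  rw [← Module.End.mul_apply, ← Module.End.mul_apply, ← LinearMap.sub_apply, h.comm,
    LinearMap.smul_apply, LinearMap.sub_apply, Module.End.mem_eigenspace_iff.mp hv,
    h.Kinv_apply_of_mem hv, ← sub_smul, smul_smul, qnum, zpow_neg, div_eq_inv_mul]

lemma pow_Xp_Xm_apply_sub (h : IsUqSl2 q Xp Xm K Kinv) (hq0 : q ≠ 0) {t : ℤ} {v : V}
    (hv : v ∈ K.eigenspace (q ^ t)) (n : ℕ) :
    (Xp ^ (n + 1)) (Xm v) - Xm ((Xp ^ (n + 1)) v) =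
      (∑ i ∈ Finset.range (n + 1), qnum q (t + 2 * i)) • (Xp ^ n) v := by
  induction n with
  | zero => simpa using h.Xp_Xm_apply_sub hv
  | succ n ih =>
    have hstep := h.Xp_Xm_apply_sub (h.pow_Xp_apply_mem_eigenspace hq0 hv (n + 1))
    have ih' := congrArg Xp ih
    rw [map_sub, map_smul] at ih'
    simp only [pow_succ' Xp (n + 1), Module.End.mul_apply] at ih' hstep ⊢
    rw [← Module.End.mul_apply Xp (Xp ^ n), ← pow_succ'] at ih'
    rw [Finset.sum_range_succ, add_smul]
    linear_combination (norm := module) ih' + hstep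

lemma sq_smul_comm (h : IsUqSl2 q Xp Xm K Kinv) :
    (q - q⁻¹) ^ 2 • (Xp * Xm - Xm * Xp) = (q - q⁻¹) • (K - Kinv) := by
  rw [h.comm, smul_smul, sq, mul_self_mul_inv]

lemma casimir_eq (h : IsUqSl2 q Xp Xm K Kinv) :
    casimir q Xp Xm K Kinv = (q - q⁻¹) ^ 2 • (Xp * Xm) + q⁻¹ • K + q • Kinv := by
  rw [casimir]
  linear_combination (norm := module) -h.sq_smul_comm

lemma commute_casimir_Xp (h : IsUqSl2 q Xp Xm K Kinv) (hq0 : q ≠ 0) :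
    Commute (casimir q Xp Xm K Kinv) Xp := by
  have hcomm := congrArg (· * Xp) h.sq_smul_comm
  simp only [sub_mul, smul_mul_assoc, mul_assoc] at hcomm
  have hqq : q * q⁻¹ = 1 := mul_inv_cancel₀ hq0
  rw [Commute, SemiconjBy, casimir]
  simp only [add_mul, mul_add, smul_mul_assoc, mul_smul_comm, mul_assoc]
  linear_combination (norm := module) -hcomm + q⁻¹ • h.KXp + q • h.Kinv_mul_Xp hq0 +
    hqq • (q • (Xp * K) + q⁻¹ • (Xp * Kinv))

lemma commute_casimir_Xm (h : IsUqSl2 q Xp Xm K Kinv) (hq0 : q ≠ 0) :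
    Commute (casimir q Xp Xm K Kinv) Xm := by
  have hcomm := congrArg (Xm * ·) h.sq_smul_comm
  simp only [mul_sub, mul_smul_comm, ← mul_assoc] at hcomm
  have hqq : q * q⁻¹ = 1 := mul_inv_cancel₀ hq0
  rw [Commute, SemiconjBy, casimir]
  simp only [add_mul, mul_add, smul_mul_assoc, mul_smul_comm, ← mul_assoc]
  linear_combination (norm := module) hcomm + q • h.KXm + q⁻¹ • h.Kinv_mul_Xm hq0 +
    hqq • (q⁻¹ • (Xm * K) + q • (Xm * Kinv))

lemma commute_K_casimir (h : IsUqSl2 q Xp Xm K Kinv) (hq0 : q ≠ 0) :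
    Commute K (casimir q Xp Xm K Kinv) := by
  have hqq : (q ^ 2)⁻¹ * q ^ 2 = 1 := inv_mul_cancel₀ (pow_ne_zero 2 hq0)
  have hKXm := congrArg (· * Xp) h.KXm
  have hKXp := congrArg (Xm * ·) h.KXp
  simp only [smul_mul_assoc, mul_smul_comm, ← mul_assoc] at hKXm hKXp
  have hKK : K * Kinv = Kinv * K := by rw [h.KKinv, h.KinvK]
  rw [Commute, SemiconjBy, casimir]
  simp only [add_mul, mul_add, smul_mul_assoc, mul_smul_comm, ← mul_assoc]
  linear_combination (norm := module) (q - q⁻¹) ^ 2 • hKXm +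
    ((q - q⁻¹) ^ 2 * (q ^ 2)⁻¹) • hKXp + q⁻¹ • hKK + hqq • ((q - q⁻¹) ^ 2 • (Xm * Xp * K))

lemma casimir_apply_of_Xp_eq_zero (h : IsUqSl2 q Xp Xm K Kinv) (hq0 : q ≠ 0) {t : ℤ} {v : V}
    (hv : v ∈ K.eigenspace (q ^ t)) (hXp : Xp v = 0) :
    casimir q Xp Xm K Kinv v = (q ^ (t + 1) + q ^ (-(t + 1))) • v := by
  simp only [casimir, LinearMap.add_apply, LinearMap.smul_apply, Module.End.mul_apply, hXp,
    map_zero, smul_zero, zero_add, Module.End.mem_eigenspace_iff.mp hv, h.Kinv_apply_of_mem hv,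
    smul_smul, ← add_smul, zpow_neg, zpow_add_one₀ hq0, mul_inv, mul_comm]

lemma casimir_apply_of_Xm_eq_zero (h : IsUqSl2 q Xp Xm K Kinv) (hq0 : q ≠ 0) {t : ℤ} {v : V}
    (hv : v ∈ K.eigenspace (q ^ t)) (hXm : Xm v = 0) :
    casimir q Xp Xm K Kinv v = (q ^ (t - 1) + q ^ (-(t - 1))) • v := by
  simp only [h.casimir_eq, LinearMap.add_apply, LinearMap.smul_apply, Module.End.mul_apply, hXm,
    map_zero, smul_zero, zero_add, Module.End.mem_eigenspace_iff.mp hv, h.Kinv_apply_of_mem hv,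
    smul_smul, ← add_smul, zpow_neg, zpow_sub_one₀ hq0, mul_inv, inv_inv, mul_comm]

lemma exists_lt_casimir_eq_of_pow_Xp_apply_eq_zero (h : IsUqSl2 q Xp Xm K Kinv) (hq0 : q ≠ 0)
    {t : ℤ} {v : V} {φ : ℂ} {n : ℕ} (hv : v ∈ K.eigenspace (q ^ t)) (hv0 : v ≠ 0)
    (hC : casimir q Xp Xm K Kinv v = φ • v) (hn : (Xp ^ n) v = 0) :
    ∃ k < n, φ = q ^ (t + 2 * k + 1) + q ^ (-(t + 2 * k + 1)) := by
  obtain ⟨k, hkn, hk0, hXp⟩ := Module.End.exists_lt_pow_apply_ne_zero_and_apply_eq_zero hv0 hn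
  have hCk : casimir q Xp Xm K Kinv ((Xp ^ k) v) = φ • (Xp ^ k) v := by
    rw [← Module.End.mul_apply, ((h.commute_casimir_Xp hq0).pow_right k).eq,
      Module.End.mul_apply, hC, map_smul]
  rw [h.casimir_apply_of_Xp_eq_zero hq0 (h.pow_Xp_apply_mem_eigenspace hq0 hv k) hXp] at hCk
  exact ⟨k, hkn, smul_left_injective ℂ hk0 hCk.symm⟩

lemma exists_casimir_eq_of_mem_eigenspace [FiniteDimensional ℂ V] (h : IsUqSl2 q Xp Xm K Kinv)
    (hq : Function.Injective (q ^ · : ℤ → ℂ)) {t : ℤ} {v : V} {φ : ℂ}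
    (hv : v ∈ K.eigenspace (q ^ t)) (hv0 : v ≠ 0) (hC : casimir q Xp Xm K Kinv v = φ • v) :
    ∃ l : ℕ, φ = q ^ (t - 2 * l - 1) + q ^ (-(t - 2 * l - 1)) := by
  have hq0 := ne_zero_of_zpow_injective hq
  obtain ⟨b, hb⟩ := Module.End.exists_forall_lt_eigenspace_zpow_eq_bot hq K
  have hN : (Xm ^ (t - b + 1).toNat) v = 0 := by
    have hmem := h.pow_Xm_apply_mem_eigenspace hq0 hv (t - b + 1).toNat
    rwa [hb _ (by omega), Submodule.mem_bot] at hmem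
  obtain ⟨l, -, hl0, hXm⟩ := Module.End.exists_lt_pow_apply_ne_zero_and_apply_eq_zero hv0 hN
  have hCl : casimir q Xp Xm K Kinv ((Xm ^ l) v) = φ • (Xm ^ l) v := by
    rw [← Module.End.mul_apply, ((h.commute_casimir_Xm hq0).pow_right l).eq,
      Module.End.mul_apply, hC, map_smul]
  rw [h.casimir_apply_of_Xm_eq_zero hq0 (h.pow_Xm_apply_mem_eigenspace hq0 hv l) hXm] at hCl
  exact ⟨l, smul_left_injective ℂ hl0 hCl.symm⟩

/-- Take a Casimir eigenvector `x` in `E(q^t) ∩ ker (Xp ^ n)`. Equating the Casimir eigenvalues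
of the highest weight vector `(Xp ^ k) x` (`k < n`) and the lowest weight vector `(Xm ^ l) x`
forces `k = l - t ≥ n`. -/
lemma eq_zero_of_pow_Xp_apply_eq_zero [FiniteDimensional ℂ V] (h : IsUqSl2 q Xp Xm K Kinv)
    (hq : Function.Injective (q ^ · : ℤ → ℂ)) {t : ℤ} {n : ℕ} (htn : t + n ≤ 0) {v : V}
    (hv : v ∈ K.eigenspace (q ^ t)) (hn : (Xp ^ n) v = 0) : v = 0 := by
  have hq0 := ne_zero_of_zpow_injective hq
  by_contra hv0
  have hS : ∀ x ∈ K.eigenspace (q ^ t) ⊓ LinearMap.ker (Xp ^ n),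
      casimir q Xp Xm K Kinv x ∈ K.eigenspace (q ^ t) ⊓ LinearMap.ker (Xp ^ n) := by
    rintro x ⟨hxK, hxXp⟩
    refine ⟨Module.End.mapsTo_genEigenspace_of_comm (h.commute_K_casimir hq0) _ 1 hxK, ?_⟩
    rw [SetLike.mem_coe, LinearMap.mem_ker, ← Module.End.mul_apply,
      ← ((h.commute_casimir_Xp hq0).pow_right n).eq, Module.End.mul_apply,
      LinearMap.mem_ker.mp hxXp, map_zero]
  obtain ⟨φ, x, ⟨hxK, hxXp⟩, hx0, hCx⟩ := Module.End.exists_mem_ne_zero_apply_eq_smul hS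
    ((Submodule.ne_bot_iff _).mpr ⟨v, ⟨hv, hn⟩, hv0⟩)
  obtain ⟨k, hkn, hk⟩ := h.exists_lt_casimir_eq_of_pow_Xp_apply_eq_zero hq0 hxK hx0 hCx hxXp
  obtain ⟨l, hl⟩ := h.exists_casimir_eq_of_mem_eigenspace hq hxK hx0 hCx
  rcases eq_or_eq_neg_of_zpow_add_zpow_neg_eq hq (hk.symm.trans hl) with heq | heq <;> omega

lemma surjOn_pow_Xp [FiniteDimensional ℂ V] (h : IsUqSl2 q Xp Xm K Kinv)
    (hq : Function.Injective (q ^ · : ℤ → ℂ)) {W : Submodule ℂ V} (hXp : ∀ v ∈ W, Xp v ∈ W)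
    {n : ℕ} (hdim : Module.finrank ℂ ↥(W ⊓ K.eigenspace (q ^ (-n : ℤ))) =
      Module.finrank ℂ ↥(W ⊓ K.eigenspace (q ^ (n : ℤ)))) :
    Set.SurjOn (Xp ^ n) (W ⊓ K.eigenspace (q ^ (-n : ℤ))) (W ⊓ K.eigenspace (q ^ (n : ℤ))) := by
  have hq0 := ne_zero_of_zpow_injective hq
  have hmaps : ∀ x ∈ W ⊓ K.eigenspace (q ^ (-n : ℤ)),
      (Xp ^ n) x ∈ W ⊓ K.eigenspace (q ^ (n : ℤ)) := by
    rintro x ⟨hxW, hxK⟩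
    have hmem := h.pow_Xp_apply_mem_eigenspace hq0 hxK n
    rw [show -(n : ℤ) + 2 * n = n by ring] at hmem
    exact ⟨Module.End.pow_apply_mem hXp n hxW, hmem⟩
  have hinj : Function.Injective ((Xp ^ n).restrict hmaps) := by
    refine (injective_iff_map_eq_zero _).mpr fun x hx => Subtype.ext ?_
    exact h.eq_zero_of_pow_Xp_apply_eq_zero hq (by omega) x.2.2 (congrArg Subtype.val hx)
  intro y hy
  obtain ⟨x, hx⟩ := (LinearMap.injective_iff_surjective_of_finrank_eq_finrank hdim).mp hinj ⟨y, hy⟩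
  exact ⟨x, x.2, congrArg Subtype.val hx⟩

lemma pow_Xp_Xm_apply_sub_mem (h : IsUqSl2 q Xp Xm K Kinv) (hq0 : q ≠ 0) {W : Submodule ℂ V}
    (hXp : ∀ v ∈ W, Xp v ∈ W) {t : ℤ} {u : V} (huW : u ∈ W) (huK : u ∈ K.eigenspace (q ^ t))
    (n : ℕ) : (Xp ^ n) (Xm u) - Xm ((Xp ^ n) u) ∈ W := by
  cases n with
  | zero => simp
  | succ n =>
    rw [h.pow_Xp_Xm_apply_sub hq0 huK n]
    exact W.smul_mem _ (Module.End.pow_apply_mem hXp n huW)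

lemma inf_eigenspace_le_comap_Xm_of_neg [FiniteDimensional ℂ V] (h : IsUqSl2 q Xp Xm K Kinv)
    (hq : Function.Injective (q ^ · : ℤ → ℂ)) {W : Submodule ℂ V} (hXp : ∀ v ∈ W, Xp v ∈ W)
    {n : ℕ} (hdim : Module.finrank ℂ ↥(W ⊓ K.eigenspace (q ^ (-n : ℤ))) =
      Module.finrank ℂ ↥(W ⊓ K.eigenspace (q ^ (n : ℤ))))
    (hneg : W ⊓ K.eigenspace (q ^ (-n : ℤ)) ≤ W.comap Xm) :
    W ⊓ K.eigenspace (q ^ (n : ℤ)) ≤ W.comap Xm := by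
  intro w hw
  obtain ⟨u, hu, rfl⟩ := h.surjOn_pow_Xp hq hXp hdim hw
  have hsub := h.pow_Xp_Xm_apply_sub_mem (ne_zero_of_zpow_injective hq) hXp hu.1 hu.2 n
  rw [Submodule.mem_comap, ← sub_sub_cancel ((Xp ^ n) (Xm u)) (Xm ((Xp ^ n) u))]
  exact W.sub_mem (Module.End.pow_apply_mem hXp n (hneg hu)) hsub

lemma inf_eigenspace_le_comap_Xm_of_add_two [FiniteDimensional ℂ V]
    (h : IsUqSl2 q Xp Xm K Kinv) (hq : Function.Injective (q ^ · : ℤ → ℂ))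
    {W : Submodule ℂ V} (hXp : ∀ v ∈ W, Xp v ∈ W)
    {n : ℕ} (hdim : Module.finrank ℂ ↥(W ⊓ K.eigenspace (q ^ (-n : ℤ))) =
      Module.finrank ℂ ↥(W ⊓ K.eigenspace (q ^ (n : ℤ))))
    (hpos : W ⊓ K.eigenspace (q ^ ((n : ℤ) + 2)) ≤ W.comap Xm) :
    W ⊓ K.eigenspace (q ^ (2 - n : ℤ)) ≤ W.comap Xm := by
  have hq0 := ne_zero_of_zpow_injective hq
  rintro w ⟨hwW, hwK⟩
  have hXmw := h.Xm_mem_eigenspace hq0 hwK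
  rw [show (2 - n : ℤ) - 2 = -n by ring] at hXmw
  have hXpw := h.pow_Xp_apply_mem_eigenspace hq0 hwK n
  rw [show (2 - n : ℤ) + 2 * n = n + 2 by ring] at hXpw
  have hy := h.pow_Xp_apply_mem_eigenspace hq0 hXmw n
  rw [show -(n : ℤ) + 2 * n = n by ring] at hy
  have hyW : (Xp ^ n) (Xm w) ∈ W := by
    rw [← sub_add_cancel ((Xp ^ n) (Xm w)) (Xm ((Xp ^ n) w))]
    exact W.add_mem (h.pow_Xp_Xm_apply_sub_mem hq0 hXp hwW hwK n)
      (hpos ⟨Module.End.pow_apply_mem hXp n hwW, hXpw⟩)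
  obtain ⟨x, hx, hxy⟩ := h.surjOn_pow_Xp hq hXp hdim ⟨hyW, hy⟩
  have hdiff : Xm w - x = 0 :=
    h.eq_zero_of_pow_Xp_apply_eq_zero hq (t := -n) (n := n) (by omega) (sub_mem hXmw hx.2)
      (by rw [map_sub, hxy, sub_self])
  rw [Submodule.mem_comap, sub_eq_zero.mp hdiff]
  exact hx.1

theorem inf_eigenspace_le_comap_Xm [FiniteDimensional ℂ V] (h : IsUqSl2 q Xp Xm K Kinv)
    (hq : Function.Injective (q ^ · : ℤ → ℂ)) {W : Submodule ℂ V} (hXp : ∀ v ∈ W, Xp v ∈ W)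
    (hsym : ∀ t : ℤ, Module.finrank ℂ ↥(W ⊓ K.eigenspace (q ^ t)) =
      Module.finrank ℂ ↥(W ⊓ K.eigenspace (q ^ (-t))))
    (t : ℤ) : W ⊓ K.eigenspace (q ^ t) ≤ W.comap Xm := by
  obtain ⟨b, hb⟩ := Module.End.exists_forall_lt_eigenspace_zpow_eq_bot hq K
  have hdim (n : ℕ) : Module.finrank ℂ ↥(W ⊓ K.eigenspace (q ^ (-n : ℤ))) =
      Module.finrank ℂ ↥(W ⊓ K.eigenspace (q ^ (n : ℤ))) := by
    have hsymn := hsym (-n)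
    rwa [neg_neg] at hsymn
  have hupper (n : ℕ) := h.inf_eigenspace_le_comap_Xm_of_neg hq hXp (hdim n)
  -- induction on how far the weight `2 - m` lies above `b`, below which all weight spaces vanish
  have hlower : ∀ k m : ℕ, (2 - m : ℤ) - k < b →
      W ⊓ K.eigenspace (q ^ (2 - m : ℤ)) ≤ W.comap Xm := by
    intro k
    induction k with
    | zero =>
      intro m hm
      rw [hb _ (by omega), inf_bot_eq]
      exact bot_le
    | succ k ih =>
      intro m hm
      have hneg := ih (m + 4) (by push_cast; omega)
      rw [show (2 - ((m + 4 : ℕ) : ℤ)) = -((m + 2 : ℕ) : ℤ) by push_cast; ring] at hneg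
      have hpos := hupper (m + 2) hneg
      push_cast at hpos
      exact h.inf_eigenspace_le_comap_Xm_of_add_two hq hXp (hdim m) hpos
  have hneg (n : ℕ) : W ⊓ K.eigenspace (q ^ (-n : ℤ)) ≤ W.comap Xm := by
    rw [show -(n : ℤ) = 2 - ((n + 2 : ℕ) : ℤ) by push_cast; ring]
    exact hlower ((2 - b).toNat + 1) _ (by omega)
  obtain ⟨n, rfl | rfl⟩ := Int.eq_nat_or_neg t
  exacts [hupper n (hneg n), hneg n]

end IsUqSl2

lemma finrank_inf_eigenspace_zpow_neg {R M : Type*} [Field R] [AddCommGroup M] [Module R M]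
    {K : Module.End R M} {q : R} (hq : Function.Injective (q ^ · : ℤ → R)) {d : ℕ}
    (hdec : ⨆ i : Fin (d + 1), K.eigenspace (q ^ (2 * (i : ℤ) - d)) = ⊤) {W : Submodule R M}
    (hdim : ∀ i : Fin (d + 1),
      Module.finrank R ↥(W ⊓ K.eigenspace (q ^ (2 * (i : ℤ) - d))) =
        Module.finrank R ↥(W ⊓ K.eigenspace (q ^ ((d : ℤ) - 2 * i))))
    (t : ℤ) :
    Module.finrank R ↥(W ⊓ K.eigenspace (q ^ t)) =
      Module.finrank R ↥(W ⊓ K.eigenspace (q ^ (-t))) := by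
  by_cases ht : ∃ i : Fin (d + 1), 2 * (i : ℤ) - d = t
  · obtain ⟨i, rfl⟩ := ht
    rw [neg_sub]
    exact hdim i
  · push Not at ht
    have hbot : ∀ s : ℤ, s = t ∨ s = -t → K.eigenspace (q ^ s) = ⊥ := by
      refine fun s hs => Module.End.eigenspace_eq_bot_of_iSup_eigenspace_eq_top hdec fun i hi => ?_
      have hexp : 2 * (i : ℤ) - d = s := hq hi
      rcases hs with rfl | rfl
      · exact ht i hexp
      · exact ht i.rev (by rw [Fin.val_rev]; omega)
    rw [hbot t (.inl rfl), hbot (-t) (.inr rfl)]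

/-- if `W` is invariant under `X⁺` and `K` and
`dim (W ∩ Uᵢ) = dim (W ∩ U_{d-i})` for all `i` (where `Uᵢ` is the eigenspace of `K`
with eigenvalue `q^(2i-d)`, and these eigenspaces span `V`), then `W` is invariant
under `X⁻`. -/
theorem stmt5 (q : ℂ) (hq0 : q ≠ 0) (hq : ∀ n : ℕ, 0 < n → q ^ n ≠ 1)
    {V : Type*} [AddCommGroup V] [Module ℂ V] [FiniteDimensional ℂ V]
    (Xp Xm K Kinv : Module.End ℂ V) (h : IsUqSl2 q Xp Xm K Kinv) (d : ℕ)
    (hdec : ⨆ i : Fin (d + 1), Module.End.eigenspace K (q ^ (2 * (i : ℤ) - d)) = ⊤)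
    (W : Submodule ℂ V)
    (hXp : ∀ v ∈ W, Xp v ∈ W) (hK : ∀ v ∈ W, K v ∈ W)
    (hdim : ∀ i : Fin (d + 1),
      Module.finrank ℂ ↥(W ⊓ Module.End.eigenspace K (q ^ (2 * (i : ℤ) - d))) =
        Module.finrank ℂ ↥(W ⊓ Module.End.eigenspace K (q ^ ((d : ℤ) - 2 * i)))) :
    ∀ v ∈ W, Xm v ∈ W := by
  have hinj := zpow_injective_of_pow_ne_one hq0 hq
  have hweights :=
    h.inf_eigenspace_le_comap_Xm hinj hXp (finrank_inf_eigenspace_zpow_neg hinj hdec hdim)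
  have hdiag : ⨆ μ, K.eigenspace μ = ⊤ :=
    top_unique (hdec ▸ iSup_le fun i => le_iSup K.eigenspace _)
  refine Module.End.le_comap_of_forall_inf_eigenspace_le hK hdiag fun μ => ?_
  by_cases hμ : ∃ i : Fin (d + 1), q ^ (2 * (i : ℤ) - d) = μ
  · obtain ⟨i, rfl⟩ := hμ
    exact hweights _
  · push Not at hμ
    rw [Module.End.eigenspace_eq_bot_of_iSup_eigenspace_eq_top hdec hμ, inf_bot_eq]
    exact bot_le

end
end

section
/- Let ℓ, m ∈ ℤ≥1, a ∈ ℂ∖{0}, 0 ≤ ν ≤ min{ℓ,m}, and n = ℓ+m−2ν. In the U'_q(L(sl₂))-module V(m) ⊗ V(ℓ,a), the vectors x̃'ₙ satisfy Δ(E₀⁺)x̃'ₙ = −aq·q^{n+2}·x̃'_{n+2}, where x̃'_{ℓ+m+2} is interpreted as 0. -/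
open scoped TensorProduct

noncomputable section

/-- `Δ(K₀) = K₀ ⊗ K₀` on `V(ℓ,a) ⊗ V(m,b)`. -/
def dK0 (q : ℂ) (ℓ m : ℕ) :
    Module.End ℂ (TensorProduct ℂ (Fin (ℓ + 1) → ℂ) (Fin (m + 1) → ℂ)) :=
  TensorProduct.map (evalK0 q ℓ) (evalK0 q m)

/-- `Δ(K₁) = K₁ ⊗ K₁` on `V(ℓ,a) ⊗ V(m,b)`. -/
def dK1 (q : ℂ) (ℓ m : ℕ) :
    Module.End ℂ (TensorProduct ℂ (Fin (ℓ + 1) → ℂ) (Fin (m + 1) → ℂ)) :=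
  TensorProduct.map (evalK1 q ℓ) (evalK1 q m)

/-- `Δ(E₀⁺) = K₀ ⊗ E₀⁺ + E₀⁺ ⊗ 1` on `V(ℓ,a) ⊗ V(m,b)`. -/
def dE0 (q : ℂ) (ℓ m : ℕ) (a b : ℂ) :
    Module.End ℂ (TensorProduct ℂ (Fin (ℓ + 1) → ℂ) (Fin (m + 1) → ℂ)) :=
  TensorProduct.map (evalK0 q ℓ) (evalE0 q b m) +
    TensorProduct.map (evalE0 q a ℓ) LinearMap.id

/-- `Δ(E₁⁺) = K₁ ⊗ E₁⁺ + E₁⁺ ⊗ 1` on `V(ℓ,a) ⊗ V(m,b)`. -/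
def dE1p (q : ℂ) (ℓ m : ℕ) :
    Module.End ℂ (TensorProduct ℂ (Fin (ℓ + 1) → ℂ) (Fin (m + 1) → ℂ)) :=
  TensorProduct.map (evalK1 q ℓ) (evalE1p q m) +
    TensorProduct.map (evalE1p q ℓ) LinearMap.id

/-- `Δ(E₁⁻) = 1 ⊗ E₁⁻ + E₁⁻ ⊗ K₁⁻¹` on `V(ℓ,a) ⊗ V(m,b)` (note `K₁⁻¹ = K₀`). -/
def dE1m (q : ℂ) (ℓ m : ℕ) :
    Module.End ℂ (TensorProduct ℂ (Fin (ℓ + 1) → ℂ) (Fin (m + 1) → ℂ)) :=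
  TensorProduct.map LinearMap.id (evalE1m q m) +
    TensorProduct.map (evalE1m q ℓ) (evalK0 q m)

/-- A linear map intertwines the five structure operators of two
`U'_q(L(sl₂))`-module structures. -/
def IntertwinesAll {V W : Type*} [AddCommGroup V] [Module ℂ V] [AddCommGroup W] [Module ℂ W]
    (σ : V →ₗ[ℂ] W) (A0 A1p A1m AK0 AK1 : Module.End ℂ V)
    (B0 B1p B1m BK0 BK1 : Module.End ℂ W) : Prop :=
  σ ∘ₗ A0 = B0 ∘ₗ σ ∧ σ ∘ₗ A1p = B1p ∘ₗ σ ∧ σ ∘ₗ A1m = B1m ∘ₗ σ ∧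
    σ ∘ₗ AK0 = BK0 ∘ₗ σ ∧ σ ∘ₗ AK1 = BK1 ∘ₗ σ

/-- The lowest weight vector `x̃'ₙ`, `n = ℓ+m-2ν`, of the `ν`-th Clebsch-Gordan component
of `V(m) ⊗ V(ℓ,a)`; defined to be `0` for `ν` out of range. -/
def xt' (q : ℂ) (ℓ m : ℕ) (ν : ℤ) :
    TensorProduct ℂ (Fin (m + 1) → ℂ) (Fin (ℓ + 1) → ℂ) :=
  if h : 0 ≤ ν ∧ ν ≤ ℓ ∧ ν ≤ m then
    ∑ j : Fin (ν.toNat + 1),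
      ((-1) ^ (j : ℕ) * q ^ ((j : ℕ) * (ℓ - (j : ℕ) + 1)) *
          qfac q (m - ν.toNat + (j : ℕ)) * qfac q (ℓ - (j : ℕ))) •
        (Pi.single (⟨m - ν.toNat + (j : ℕ), by have := j.isLt; omega⟩ : Fin (m + 1)) (1 : ℂ)
          ⊗ₜ[ℂ] Pi.single (⟨ℓ - (j : ℕ), by have := j.isLt; omega⟩ : Fin (ℓ + 1)) (1 : ℂ))
  else 0


lemma mulVecLin_single {n : ℕ} (M : Matrix (Fin n) (Fin n) ℂ) (i : Fin n) :
    M.mulVecLin (Pi.single i 1) = fun j => M j i := by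
  ext j; simp [Matrix.mulVecLin, Matrix.mulVec_single]

lemma evalK0_single (q : ℂ) (ℓ : ℕ) (i : Fin (ℓ + 1)) :
    evalK0 q ℓ (Pi.single i 1) =
      q ^ (2 * (i : ℤ) - ℓ) • (Pi.single i 1 : Fin (ℓ + 1) → ℂ) := by
  rw [evalK0, mulVecLin_single]
  ext j
  simp only [Matrix.diagonal_apply, Pi.smul_apply, Pi.single_apply, smul_eq_mul]
  by_cases h : j = i <;> simp [h]

lemma evalE0_zero (q : ℂ) (m : ℕ) : evalE0 q 0 m = 0 := by
  ext v j
  simp [evalE0, Matrix.mulVecLin, Matrix.mulVec, dotProduct]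

lemma evalE0_single_lt (q a : ℂ) (ℓ : ℕ) (i : Fin (ℓ + 1)) (h : (i : ℕ) < ℓ) :
    evalE0 q a ℓ (Pi.single i 1) =
      (a * q * qnum q ((i : ℤ) + 1)) •
        (Pi.single (⟨(i : ℕ) + 1, by omega⟩ : Fin (ℓ + 1)) 1 : Fin (ℓ + 1) → ℂ) := by
  rw [evalE0, mulVecLin_single]
  ext j
  simp only [Matrix.of_apply, Pi.smul_apply, Pi.single_apply, smul_eq_mul]
  by_cases hj : (j : ℕ) = (i : ℕ) + 1
  · rw [if_pos hj, if_pos (by ext; simp [hj]), mul_one]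
  · rw [if_neg hj, if_neg (by intro hh; exact hj (by rw [hh])), mul_zero]

lemma evalE0_single_last (q a : ℂ) (ℓ : ℕ) (i : Fin (ℓ + 1)) (h : (i : ℕ) = ℓ) :
    evalE0 q a ℓ (Pi.single i 1) = 0 := by
  rw [evalE0, mulVecLin_single]
  ext j
  simp only [Matrix.of_apply, Pi.zero_apply]
  rw [if_neg]
  omega

lemma key (q a : ℂ) (hq0 : q ≠ 0) (ℓ m k j : ℕ) (hik : j ≤ k) (h1 : k + 1 ≤ ℓ)
    (h2 : k + 1 ≤ m) :
    (-1 : ℂ) ^ (j + 1) * q ^ ((j + 1) * (ℓ - (j + 1) + 1)) * qfac q (m - (k + 1) + (j + 1)) *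
        qfac q (ℓ - (j + 1)) * (a * q * qnum q (((ℓ - (j + 1) : ℕ) : ℤ) + 1)) *
        q ^ (2 * ((m - (k + 1) + (j + 1) : ℕ) : ℤ) - (m : ℤ)) =
      -(a * q) * q ^ (ℓ + m - 2 * (k + 1) + 2) *
        ((-1 : ℂ) ^ j * q ^ (j * (ℓ - j + 1)) * qfac q (m - k + j) * qfac q (ℓ - j)) := by
  obtain ⟨t, rfl⟩ : ∃ t, k = j + t := ⟨k - j, by omega⟩
  obtain ⟨c, rfl⟩ : ∃ c, ℓ = c + t + j + 1 := ⟨ℓ - (t + j + 1), by omega⟩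
  obtain ⟨e, rfl⟩ : ∃ e, m = e + j + t + 1 := ⟨m - (j + t + 1), by omega⟩
  rw [show c + t + j + 1 - (j + 1) = c + t from by omega,
    show c + t + j + 1 - j = c + t + 1 from by omega,
    show e + j + t + 1 - (j + t + 1) + (j + 1) = e + j + 1 from by omega,
    show e + j + t + 1 - (j + t) + j = e + j + 1 from by omega,
    show c + t + j + 1 + (e + j + t + 1) - 2 * (j + t + 1) + 2 = c + e + 2
      from by omega,
    show (2 * ((e + j + 1 : ℕ) : ℤ) - ((e + j + t + 1 : ℕ) : ℤ))
        = ((e + j + 1 : ℕ) : ℤ) - ((t : ℕ) : ℤ) from by push_cast; ring,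
    zpow_sub₀ hq0, zpow_natCast, zpow_natCast,
    show qfac q (c + t + 1) = qfac q (c + t) * qnum q ((c + t : ℕ) + 1)
      from Finset.prod_range_succ _ _]
  field_simp
  ring


/-- in `V(m) ⊗ V(ℓ,a)`, `Δ(E₀⁺) x̃'ₙ = -a q · q^(n+2) x̃'ₙ₊₂`
(with `x̃'_{ℓ+m+2} = 0`, i.e. `xt'` at `ν - 1`), where `n = ℓ+m-2ν`. -/
theorem stmt17 (q : ℂ) (hq0 : q ≠ 0) (hq : ∀ n : ℕ, 0 < n → q ^ n ≠ 1)
    (ℓ m : ℕ) (hℓ : 1 ≤ ℓ) (hm : 1 ≤ m) (a : ℂ) (ha : a ≠ 0)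
    (ν : ℕ) (hνℓ : ν ≤ ℓ) (hνm : ν ≤ m) :
    dE0 q m ℓ 0 a (xt' q ℓ m ν) =
      (-(a * q) * q ^ (ℓ + m - 2 * ν + 2)) • xt' q ℓ m ((ν : ℤ) - 1) := by
  have hmap0 : dE0 q m ℓ 0 a = TensorProduct.map (evalK0 q m) (evalE0 q a ℓ) := by
    rw [dE0, evalE0_zero]
    ext x y
    simp
  rw [hmap0]
  rw [xt', dif_pos (by exact ⟨by positivity, by exact_mod_cast hνℓ, by exact_mod_cast hνm⟩)]
  rw [map_sum]
  simp only [Int.toNat_natCast, LinearMapClass.map_smul, TensorProduct.map_tmul]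
  obtain _ | k := ν
  · rw [show ((0:ℕ):ℤ) - 1 = -1 by norm_num, xt', dif_neg (by omega), smul_zero]
    rw [Fin.sum_univ_one]
    rw [evalE0_single_last q a ℓ _ (by simp), TensorProduct.tmul_zero, smul_zero]
  · rw [show ((k+1:ℕ):ℤ) - 1 = ((k:ℕ):ℤ) by push_cast; ring, xt',
      dif_pos (by exact ⟨by positivity, by exact_mod_cast (by omega : k ≤ ℓ),
        by exact_mod_cast (by omega : k ≤ m)⟩)]
    simp only [Int.toNat_natCast]
    rw [Finset.smul_sum]
    rw [Fin.sum_univ_succ]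
    rw [evalE0_single_last q a ℓ _ (by simp), TensorProduct.tmul_zero, smul_zero, zero_add]
    refine Finset.sum_congr rfl fun i _ => ?_
    have hik : (i : ℕ) ≤ k := by omega
    rw [evalK0_single, evalE0_single_lt q a ℓ _ (by simp; omega)]
    simp only [Fin.val_succ]
    have e1 : (⟨(⟨ℓ - ((i : ℕ) + 1), by omega⟩ : Fin (ℓ + 1)).val + 1, by simp; omega⟩ : Fin (ℓ + 1)) =
        (⟨ℓ - (i : ℕ), by omega⟩ : Fin (ℓ + 1)) := Fin.ext (by simp; omega)
    have e2 : (⟨m - (k + 1) + ((i : ℕ) + 1), by omega⟩ : Fin (m + 1)) =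
        (⟨m - k + (i : ℕ), by omega⟩ : Fin (m + 1)) := Fin.ext (by simp; omega)
    rw [e1, e2]
    rw [TensorProduct.tmul_smul, ← TensorProduct.smul_tmul', smul_smul, smul_smul, smul_smul]
    congr 1
    exact key q a hq0 ℓ m k (i : ℕ) hik hνℓ hνm


end
end
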